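/- arXiv:2305.18581 — 2 statements merged into one kernel-verified Lean document; each statement's English description precedes it below -/
import Mathlib

section
/- Let X be a 1-generic set and let {C_i = A_i \ B_i} be a uniformly computable sequence of differences of c.e. sets (A_i, B_i uniformly c.e.). If there is an X-computable function f with f(i) ∈ A_i \ B_i for all i, then there is a computable function g with g(i) ∈ A_i \ B_i for all i. -/
/-!
By the use principle, an `X`-computable `f` is the limit of a partial computable functional
`F σ` on finite strings, monotone along the initial segments of `X`. The strings `σ` on which
`F σ` outputs some `y ∈ B i` at an argument `i` form a c.e. set `W`. No initial segment of `X`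
lies in `W`, since along `X` the functional computes `f`, so 1-genericity yields `σ₀ ⊂ X` none
of whose extensions lies in `W`. Then `g i` searches for an extension `τ` of `σ₀` and a value
`y = F τ i` that is enumerated into `A i`: the search succeeds because `f i` is found along `X`,
and its result avoids `B i` because `τ ∉ W`.
-/

open Classical in
/-- Characteristic function of a set of naturals. -/
noncomputable def chi (A : Set ℕ) : ℕ → ℕ := fun n => if n ∈ A then 1 else 0

/-- Partial functions computable relative to an oracle `O : ℕ → ℕ`. -/
inductive OracleRecursiveIn (O : ℕ → ℕ) : (ℕ →. ℕ) → Prop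
  | zero : OracleRecursiveIn O (pure 0)
  | succ : OracleRecursiveIn O Nat.succ
  | left : OracleRecursiveIn O ↑fun n : ℕ => n.unpair.1
  | right : OracleRecursiveIn O ↑fun n : ℕ => n.unpair.2
  | oracle : OracleRecursiveIn O ↑O
  | pair {f g} : OracleRecursiveIn O f → OracleRecursiveIn O g →
      OracleRecursiveIn O fun n => Nat.pair <$> f n <*> g n
  | comp {f g} : OracleRecursiveIn O f → OracleRecursiveIn O g →
      OracleRecursiveIn O fun n => g n >>= f
  | prec {f g} : OracleRecursiveIn O f → OracleRecursiveIn O g →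
      OracleRecursiveIn O (Nat.unpaired fun a n =>
        n.rec (f a) fun y IH => do let i ← IH; g (Nat.pair a (Nat.pair y i)))
  | rfind {f} : OracleRecursiveIn O f →
      OracleRecursiveIn O fun a => Nat.rfind fun n => (fun m => m = 0) <$> f (Nat.pair a n)

/-- Turing reducibility between sets of naturals: `A ≤_T B`. -/
def SetTuringRed (A B : Set ℕ) : Prop := OracleRecursiveIn (chi B) ↑(chi A)

/-- `A` is computably enumerable. -/
def CE (A : Set ℕ) : Prop := ∃ f : ℕ →. ℕ, Nat.Partrec f ∧ ∀ n, n ∈ A ↔ (f n).Dom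

/-- `A` is c.e. relative to the oracle `O`. -/
def CEIn (O : ℕ → ℕ) (A : Set ℕ) : Prop :=
  ∃ f : ℕ →. ℕ, OracleRecursiveIn O f ∧ ∀ n, n ∈ A ↔ (f n).Dom

/-- A uniformly c.e. sequence of sets. -/
def UnifCE (A : ℕ → Set ℕ) : Prop :=
  ∃ f : ℕ →. ℕ, Nat.Partrec f ∧ ∀ i x, x ∈ A i ↔ (f (Nat.pair i x)).Dom

/-- `W` is a c.e. set of binary strings. -/
def CEString (W : Set (List Bool)) : Prop :=
  ∃ f : ℕ →. ℕ, Nat.Partrec f ∧ ∀ σ : List Bool, σ ∈ W ↔ (f (Encodable.encode σ)).Dom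

/-- `σ` is an initial segment of the characteristic function of `X`. -/
def PrefixOf (σ : List Bool) (X : Set ℕ) : Prop :=
  ∀ i : Fin σ.length, (σ.get i = true ↔ (i : ℕ) ∈ X)

/-- `X` is 1-generic. -/
def OneGeneric (X : Set ℕ) : Prop :=
  ∀ W : Set (List Bool), CEString W →
    ∃ σ : List Bool, PrefixOf σ X ∧ (σ ∈ W ∨ ∀ τ : List Bool, σ <+: τ → τ ∉ W)

lemma Part.mem_map_seq {α β γ : Type} {f : α → β → γ} {a : Part α} {b : Part β} {y : γ} :
    y ∈ f <$> a <*> b ↔ ∃ u ∈ a, ∃ v ∈ b, f u v = y := by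
  simp [Seq.seq, Part.mem_bind_iff, Part.mem_map_iff]

lemma Part.dom_bind_iff {α β : Type*} {x : Part α} {f : α → Part β} :
    (x.bind f).Dom ↔ ∃ y ∈ x, (f y).Dom :=
  Part.bind_dom.trans ⟨fun ⟨h, hf⟩ => ⟨_, Part.get_mem h, hf⟩,
    fun ⟨_, hy, hf⟩ => ⟨hy.1, by rwa [Part.get_eq_of_mem hy]⟩⟩

lemma Part.map_le_map {α β : Type*} (f : α → β) {a b : Part α} (h : a ≤ b) : a.map f ≤ b.map f :=
  monotone_id.partMap h

lemma Nat.mem_rfind_of_le {p q : ℕ →. Bool} {y : ℕ} (h : ∀ m ≤ y, p m ≤ q m)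
    (hy : y ∈ Nat.rfind p) : y ∈ Nat.rfind q := by
  rw [Nat.mem_rfind] at hy ⊢
  exact ⟨h y le_rfl _ hy.1, fun hm => h _ hm.le _ (hy.2 hm)⟩

open Nat.Partrec in
theorem Partrec₂.exists_code_dom_iff {α β γ : Type*} [Primcodable α] [Primcodable β]
    [Primcodable γ] {p : α → β → Part γ} (hp : Partrec₂ p) :
    ∃ c : Code, ∀ a b, (p a b).Dom ↔ ∃ k, (Code.evaln k c (Encodable.encode (a, b))).isSome := by
  obtain ⟨c, hc⟩ := Code.exists_code.1 hp
  refine ⟨c, fun a b => ?_⟩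
  have heval : Code.eval c (Encodable.encode (a, b)) = (p a b).map Encodable.encode := by
    simp only [hc, Encodable.encodek]; simp
  simp only [Option.isSome_iff_exists, ← Option.mem_def]
  rw [← Part.map_Dom Encodable.encode, ← heval, Part.dom_iff_mem]
  exact ⟨fun ⟨x, hx⟩ => (Code.evaln_complete.1 hx).imp fun k hk => ⟨x, hk⟩,
    fun ⟨k, x, hx⟩ => ⟨x, Code.evaln_sound hx⟩⟩

open Nat.Partrec in
theorem Partrec.exists_witness {α β γ : Type*} [Primcodable α] [Primcodable β] [Primcodable γ]
    {p : α → β → Part γ} (hp : Partrec₂ p) :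
    ∃ w : α →. β, Partrec w ∧ ∀ a, ((w a).Dom ↔ ∃ b, (p a b).Dom) ∧ ∀ b ∈ w a, (p a b).Dom := by
  obtain ⟨c, hdom⟩ := hp.exists_code_dom_iff
  -- dovetailing: stage `n` runs the computation of `p a b`, `b` decoded from `n.unpair.1`,
  -- for `n.unpair.2` steps
  let test : α → ℕ → Option β := fun a n => (Encodable.decode n.unpair.1).bind fun b =>
    (Code.evaln n.unpair.2 c (Encodable.encode (a, b))).map fun _ => b
  have hrun : Computable₂ fun (q : α × ℕ) (b : β) =>
      Code.evaln q.2.unpair.2 c (Encodable.encode (q.1, b)) :=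
    Computable.comp (f := fun x : (ℕ × Code) × ℕ => Code.evaln x.1.1 x.1.2 x.2)
      (g := fun x : (α × ℕ) × β => ((x.1.2.unpair.2, c), Encodable.encode (x.1.1, x.2)))
      Code.primrec_evaln.to_comp
      (((Computable.snd.comp (Computable.unpair.comp (Computable.snd.comp Computable.fst))).pair
        (Computable.const c)).pair
        (Computable.encode.comp ((Computable.fst.comp Computable.fst).pair Computable.snd)))
  have htest : Computable₂ test :=
    Computable.option_bind
      (Computable.decode.comp (Computable.fst.comp (Computable.unpair.comp Computable.snd)))
      (Computable.option_map hrun (Computable.snd.comp Computable.fst).to₂)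
  have hmem : ∀ a b, (∃ n, b ∈ test a n) ↔ (p a b).Dom := by
    intro a b
    rw [hdom]
    constructor
    · rintro ⟨n, hn⟩
      simp only [test, Option.mem_def, Option.bind_eq_some_iff, Option.map_eq_some_iff] at hn
      obtain ⟨b, -, x, hx, rfl⟩ := hn
      exact ⟨_, Option.isSome_iff_exists.2 ⟨x, hx⟩⟩
    · rintro ⟨k, hk⟩
      obtain ⟨x, hx⟩ := Option.isSome_iff_exists.1 hk
      refine ⟨Nat.pair (Encodable.encode b) k, ?_⟩
      simp only [test, Option.mem_def, Nat.unpair_pair, Encodable.encodek, Option.bind_some, hx,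
        Option.map_some]
  refine ⟨fun a => Nat.rfindOpt (test a), Partrec.rfindOpt htest, fun a => ⟨?_, ?_⟩⟩
  · rw [Nat.rfindOpt_dom, exists_comm]
    exact exists_congr fun b => hmem a b
  · exact fun b hb => (hmem a b).1 (Nat.rfindOpt_spec hb)

lemma UnifCE.exists_partrec₂ {A : ℕ → Set ℕ} (hA : UnifCE A) :
    ∃ a : ℕ → ℕ → Part ℕ, Partrec₂ a ∧ ∀ i x, x ∈ A i ↔ (a i x).Dom :=
  let ⟨a, ha, hmem⟩ := hA
  ⟨fun i x => a (Nat.pair i x), (Partrec.nat_iff.2 ha).comp Primrec₂.natPair.to_comp, hmem⟩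

lemma ceString_of_partrec {γ : Type*} [Primcodable γ] {W : Set (List Bool)}
    {w : List Bool →. γ} (hw : Partrec w) (hW : ∀ σ, σ ∈ W ↔ (w σ).Dom) : CEString W :=
  ⟨_, hw, fun σ => by simp [hW, Encodable.encodek]⟩

open Classical in
noncomputable def initSeg (X : Set ℕ) (k : ℕ) : List Bool := (List.range k).map (· ∈ X)

section initSeg

variable {X : Set ℕ}

open Classical in
lemma getElem?_initSeg (k n : ℕ) :
    (initSeg X k)[n]? = if n < k then some (decide (n ∈ X)) else none := by
  split_ifs with h
  · simp [initSeg, List.getElem?_range h]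
  · simp [initSeg]; omega

lemma initSeg_prefix_initSeg {k m : ℕ} (h : k ≤ m) : initSeg X k <+: initSeg X m := by
  rw [List.prefix_iff_eq_take]
  simp [initSeg, ← List.map_take, List.take_range, h]

lemma PrefixOf.eq_initSeg {σ : List Bool} (h : PrefixOf σ X) : σ = initSeg X σ.length := by
  refine List.ext_getElem (by simp [initSeg]) fun n h₁ _ => ?_
  rw [Bool.eq_iff_iff]
  simpa [initSeg] using h ⟨n, h₁⟩

lemma PrefixOf.prefix_initSeg {σ : List Bool} (h : PrefixOf σ X) {k : ℕ}
    (hk : σ.length ≤ k) : σ <+: initSeg X k := by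
  rw [h.eq_initSeg]
  exact initSeg_prefix_initSeg hk

end initSeg

/-- The recursion built by `OracleRecursiveIn.prec`, which is `Nat.unpaired (precRec f g)`. -/
def precRec (f g : ℕ →. ℕ) (a n : ℕ) : Part ℕ :=
  n.rec (f a) fun y ih => do let i ← ih; g (Nat.pair a (Nat.pair y i))

lemma precRec_mono {f f' g g' : ℕ →. ℕ} (hf : ∀ n, f n ≤ f' n) (hg : ∀ n, g n ≤ g' n)
    (a n : ℕ) : precRec f g a n ≤ precRec f' g' a n := by
  induction n with
  | zero => exact hf a
  | succ n ih =>
    intro y hy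
    obtain ⟨i, hi, hy⟩ := Part.mem_bind_iff.1 hy
    exact Part.mem_bind_iff.2 ⟨i, ih i hi, hg _ y hy⟩

/-- The use principle: `F σ` runs the computation of `φ` with the finite string `σ` in place of
the oracle `X`. -/
structure UseApprox (X : Set ℕ) (F : List Bool → ℕ → Part ℕ) (φ : ℕ →. ℕ) : Prop where
  partrec : Partrec₂ F
  monotone (n : ℕ) : Monotone fun k => F (initSeg X k) n
  mem_iff {n y : ℕ} : y ∈ φ n ↔ ∃ k, y ∈ F (initSeg X k) n

namespace UseApprox

open Filter

variable {X : Set ℕ} {F G : List Bool → ℕ → Part ℕ} {φ ψ : ℕ →. ℕ}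

lemma le (hF : UseApprox X F φ) (k n : ℕ) : F (initSeg X k) n ≤ φ n :=
  fun _ hy => hF.mem_iff.2 ⟨k, hy⟩

lemma eventually_mem (hF : UseApprox X F φ) {n y : ℕ} (hy : y ∈ φ n) :
    ∀ᶠ k in atTop, y ∈ F (initSeg X k) n := by
  obtain ⟨k, hk⟩ := hF.mem_iff.1 hy
  exact eventually_atTop.2 ⟨k, fun m hm => hF.monotone n hm y hk⟩

lemma eventually_le (hF : UseApprox X F φ) {n : ℕ} (h : (φ n).Dom) :
    ∀ᶠ k in atTop, φ n ≤ F (initSeg X k) n :=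
  (hF.eventually_mem (Part.get_mem h)).mono fun _ hk _ hy =>
    Part.mem_unique (Part.get_mem h) hy ▸ hk

lemma of_natPartrec (hφ : Nat.Partrec φ) : UseApprox X (fun _ => φ) φ where
  partrec := (Partrec.nat_iff.2 hφ).comp Computable.snd
  monotone _ := monotone_const
  mem_iff := ⟨fun h => ⟨0, h⟩, fun ⟨_, h⟩ => h⟩

open Classical in
lemma oracle : UseApprox X (fun σ n => (σ[n]?.map Bool.toNat : Part ℕ)) ↑(chi X) where
  partrec := Computable.ofOption <| Computable.option_map
    (Computable.list_getElem?.comp Computable.fst Computable.snd)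
    ((Primrec.dom_bool Bool.toNat).to_comp.comp Computable.snd)
  monotone n k m h y := by
    simp only [getElem?_initSeg, Part.mem_coe]
    split_ifs <;> first | omega | simp
  mem_iff {n y} := by
    have hchi : chi X n = (decide (n ∈ X)).toNat := by
      unfold chi; split_ifs <;> simp_all
    simp only [getElem?_initSeg, Part.mem_coe, PFun.coe_val, Part.mem_some_iff, hchi]
    exact ⟨fun h => ⟨n + 1, by simp [h]⟩, fun ⟨k, hk⟩ => by split_ifs at hk <;> simp_all⟩

lemma pair (hF : UseApprox X F φ) (hG : UseApprox X G ψ) :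
    UseApprox X (fun σ n => Nat.pair <$> F σ n <*> G σ n) (fun n => Nat.pair <$> φ n <*> ψ n) where
  partrec := by
    have hG' : Partrec₂ fun (p : List Bool × ℕ) (u : ℕ) => (G p.1 p.2).map (Nat.pair u) :=
      Partrec.map
        (hG.partrec.comp (Computable.fst.comp Computable.fst) (Computable.snd.comp Computable.fst))
        (Primrec₂.natPair.to_comp.comp (Computable.snd.comp Computable.fst) Computable.snd)
    refine (hF.partrec.bind hG').of_eq fun p => Part.ext fun z => ?_
    simp only [Part.mem_map_seq, Part.mem_bind_iff, Part.mem_map_iff]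
  monotone n := ((hF.monotone n).partMap).partSeq (hG.monotone n)
  mem_iff {n y} := by
    simp only [Part.mem_map_seq]
    constructor
    · rintro ⟨u, hu, v, hv, rfl⟩
      obtain ⟨k, hu, hv⟩ := ((hF.eventually_mem hu).and (hG.eventually_mem hv)).exists
      exact ⟨k, u, hu, v, hv, rfl⟩
    · rintro ⟨k, u, hu, v, hv, rfl⟩
      exact ⟨u, hF.le k n u hu, v, hG.le k n v hv, rfl⟩

lemma comp (hF : UseApprox X F φ) (hG : UseApprox X G ψ) :
    UseApprox X (fun σ n => G σ n >>= F σ) (fun n => ψ n >>= φ) where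
  partrec := hG.partrec.bind (hF.partrec.comp (Computable.fst.comp Computable.fst) Computable.snd)
  monotone n := (hG.monotone n).partBind fun _ _ h z => hF.monotone z h
  mem_iff {n y} := by
    refine Part.mem_bind_iff.trans ⟨?_, ?_⟩
    · rintro ⟨z, hz, hy⟩
      obtain ⟨k, hz, hy⟩ := ((hG.eventually_mem hz).and (hF.eventually_mem hy)).exists
      exact ⟨k, Part.mem_bind_iff.2 ⟨z, hz, hy⟩⟩
    · rintro ⟨k, hk⟩
      obtain ⟨z, hz, hy⟩ := Part.mem_bind_iff.1 hk
      exact ⟨z, hG.le k n z hz, hF.le k z y hy⟩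

lemma rfind (hF : UseApprox X F φ) :
    UseApprox X (fun σ a => Nat.rfind fun n => (fun m => decide (m = 0)) <$> F σ (Nat.pair a n))
      (fun a => Nat.rfind fun n => (fun m => decide (m = 0)) <$> φ (Nat.pair a n)) where
  partrec := by
    have hp : Partrec₂ fun (p : List Bool × ℕ) (n : ℕ) =>
        (F p.1 (Nat.pair p.2 n)).map fun m => decide (m = 0) :=
      Partrec.map
        (hF.partrec.comp (Computable.fst.comp Computable.fst)
          (Primrec₂.natPair.to_comp.comp (Computable.snd.comp Computable.fst) Computable.snd))
        (Primrec.eq.comp Primrec.snd (Primrec.const 0)).decide.to_comp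
    exact (Partrec.rfind hp).of_eq fun p => by simp [Part.map_eq_map]
  monotone a _ _ h _ :=
    Nat.mem_rfind_of_le fun _ _ => Part.map_le_map _ (hF.monotone _ h)
  mem_iff {a y} := by
    constructor
    · intro hy
      have hdom : ∀ m ∈ Set.Iic y, (φ (Nat.pair a m)).Dom := by
        intro m hm
        obtain ⟨htrue, hfalse⟩ := Nat.mem_rfind.1 hy
        rcases (Set.mem_Iic.1 hm).lt_or_eq with hm | rfl
        · exact (hfalse hm).1
        · exact htrue.1
      obtain ⟨k, hk⟩ := ((eventually_all_finite (Set.finite_Iic y)).2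
        fun m hm => hF.eventually_le (hdom m hm)).exists
      exact ⟨k, Nat.mem_rfind_of_le (fun m hm => Part.map_le_map _ (hk m hm)) hy⟩
    · rintro ⟨k, hk⟩
      exact Nat.mem_rfind_of_le (fun _ _ => Part.map_le_map _ (hF.le k _)) hk

lemma prec (hF : UseApprox X F φ) (hG : UseApprox X G ψ) :
    UseApprox X (fun σ => Nat.unpaired (precRec (F σ) (G σ))) (Nat.unpaired (precRec φ ψ)) where
  partrec := by
    have hG' : Partrec₂ fun (p : List Bool × ℕ) (q : ℕ × ℕ) =>
        G p.1 (Nat.pair p.2.unpair.1 (Nat.pair q.1 q.2)) :=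
      hG.partrec.comp (Computable.fst.comp Computable.fst)
        (Primrec₂.natPair.to_comp.comp
          (Computable.fst.comp (Computable.unpair.comp (Computable.snd.comp Computable.fst)))
          (Primrec₂.natPair.to_comp.comp (Computable.fst.comp Computable.snd)
            (Computable.snd.comp Computable.snd)))
    refine (Partrec.nat_rec (Computable.snd.comp (Computable.unpair.comp Computable.snd))
      (hF.partrec.comp Computable.fst (Computable.fst.comp (Computable.unpair.comp Computable.snd)))
      hG').of_eq fun p => ?_
    simp [precRec, Nat.unpaired]
  monotone _ _ _ h := precRec_mono (fun n => hF.monotone n h) (fun n => hG.monotone n h) _ _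
  mem_iff {m y} := by
    have key : ∀ a n y, y ∈ precRec φ ψ a n →
        ∀ᶠ k in atTop, y ∈ precRec (F (initSeg X k)) (G (initSeg X k)) a n := by
      intro a n
      induction n with
      | zero => exact fun y hy => hF.eventually_mem hy
      | succ n ih =>
        intro y hy
        obtain ⟨i, hi, hy⟩ := Part.mem_bind_iff.1 hy
        exact ((ih i hi).and (hG.eventually_mem hy)).mono fun k hk =>
          Part.mem_bind_iff.2 ⟨i, hk⟩
    exact ⟨fun hy => (key _ _ y hy).exists,
      fun ⟨k, hk⟩ => precRec_mono (hF.le k) (hG.le k) _ _ y hk⟩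

end UseApprox

theorem exists_useApprox {X : Set ℕ} {φ : ℕ →. ℕ} (hφ : OracleRecursiveIn (chi X) φ) :
    ∃ F, UseApprox X F φ := by
  induction hφ with
  | zero => exact ⟨_, .of_natPartrec .zero⟩
  | succ => exact ⟨_, .of_natPartrec .succ⟩
  | left => exact ⟨_, .of_natPartrec .left⟩
  | right => exact ⟨_, .of_natPartrec .right⟩
  | oracle => exact ⟨_, .oracle⟩
  | pair _ _ ihf ihg =>
    obtain ⟨F, hF⟩ := ihf
    obtain ⟨G, hG⟩ := ihg
    exact ⟨_, hF.pair hG⟩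
  | comp _ _ ihf ihg =>
    obtain ⟨F, hF⟩ := ihf
    obtain ⟨G, hG⟩ := ihg
    exact ⟨_, hF.comp hG⟩
  | prec _ _ ihf ihg =>
    obtain ⟨F, hF⟩ := ihf
    obtain ⟨G, hG⟩ := ihg
    exact ⟨_, hF.prec hG⟩
  | rfind _ ih =>
    obtain ⟨F, hF⟩ := ih
    exact ⟨_, hF.rfind⟩

lemma ceString_exists_mem_of_unifCE {F : List Bool → ℕ → Part ℕ} (hF : Partrec₂ F)
    {B : ℕ → Set ℕ} (hB : UnifCE B) : CEString {σ | ∃ i, ∃ y ∈ F σ i, y ∈ B i} := by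
  obtain ⟨b, hb, hBmem⟩ := hB.exists_partrec₂
  obtain ⟨w, hw, hwit⟩ := Partrec.exists_witness (p := fun σ i => (F σ i).bind (b i))
    (hF.bind (hb.comp (Computable.snd.comp Computable.fst) Computable.snd))
  exact ceString_of_partrec hw fun σ => by
    simp only [Set.mem_ofPred_eq, (hwit σ).1, Part.dom_bind_iff, hBmem]

lemma exists_computable_selector {β : Type*} [Primcodable β] {G : ℕ → β → Part ℕ} (hG : Partrec₂ G)
    {A : ℕ → Set ℕ} (hA : UnifCE A) (h : ∀ i, ∃ b, ∃ y ∈ G i b, y ∈ A i) :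
    ∃ g : ℕ → ℕ, Computable g ∧ ∀ i, g i ∈ A i ∧ ∃ b, g i ∈ G i b := by
  obtain ⟨a, ha, hAmem⟩ := hA.exists_partrec₂
  obtain ⟨w, hw, hwit⟩ := Partrec.exists_witness (p := fun i b => (G i b).bind (a i))
    (hG.bind (ha.comp (Computable.fst.comp Computable.fst) Computable.snd))
  have hdom : ∀ i, ((w i).bind (G i)).Dom := by
    intro i
    have hwi : (w i).Dom := (hwit i).1.2 (by simpa only [Part.dom_bind_iff, hAmem] using h i)
    obtain ⟨y, hy, -⟩ := Part.dom_bind_iff.1 ((hwit i).2 _ (Part.get_mem hwi))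
    exact Part.bind_dom.2 ⟨hwi, hy.1⟩
  have hspec : ∀ i y, y ∈ (w i).bind (G i) → y ∈ A i ∧ ∃ b, y ∈ G i b := by
    intro i y hy
    obtain ⟨b, hb, hy⟩ := Part.mem_bind_iff.1 hy
    obtain ⟨y', hy', hy'A⟩ := Part.dom_bind_iff.1 ((hwit i).2 b hb)
    exact ⟨Part.mem_unique hy' hy ▸ (hAmem _ _).2 hy'A, b, hy⟩
  exact ⟨fun i => ((w i).bind (G i)).get (hdom i),
    (hw.bind hG).of_eq_tot fun i => Part.get_mem (hdom i), fun i => hspec i _ (Part.get_mem _)⟩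

theorem stmt0 (X : Set ℕ) (hX : OneGeneric X) (A B : ℕ → Set ℕ)
    (hA : UnifCE A) (hB : UnifCE B)
    (f : ℕ → ℕ) (hf : OracleRecursiveIn (chi X) ↑f)
    (hsel : ∀ i, f i ∈ A i \ B i) :
    ∃ g : ℕ → ℕ, Computable g ∧ ∀ i, g i ∈ A i \ B i := by
  obtain ⟨F, hF⟩ := exists_useApprox hf
  obtain ⟨σ₀, hσ₀X, hσ₀⟩ := hX _ (ceString_exists_mem_of_unifCE hF.partrec hB)
  have hext : ∀ τ, σ₀ <+: τ → ¬∃ i, ∃ y ∈ F τ i, y ∈ B i := by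
    refine hσ₀.resolve_left ?_
    rintro ⟨i, y, hy, hyB⟩
    rw [hσ₀X.eq_initSeg] at hy
    exact (hsel i).2 (Part.mem_some_iff.1 (hF.le _ i y hy) ▸ hyB)
  have hfA : ∀ i, ∃ t, ∃ y ∈ F (σ₀ ++ t) i, y ∈ A i := by
    intro i
    obtain ⟨k, hk, hσ₀k⟩ :=
      ((hF.eventually_mem (Part.mem_some (f i))).and (Filter.eventually_ge_atTop σ₀.length)).exists
    obtain ⟨t, ht⟩ := hσ₀X.prefix_initSeg hσ₀k
    exact ⟨t, f i, ht ▸ hk, (hsel i).1⟩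
  obtain ⟨g, hg, hgsel⟩ := exists_computable_selector (G := fun i t => F (σ₀ ++ t) i)
    (hF.partrec.comp (Computable.list_append.comp (Computable.const σ₀) Computable.snd)
      Computable.fst) hA hfA
  refine ⟨g, hg, fun i => ⟨(hgsel i).1, fun hgB => ?_⟩⟩
  obtain ⟨t, ht⟩ := (hgsel i).2
  exact hext _ (List.prefix_append σ₀ t) ⟨i, g i, ht, hgB⟩
end

section
/- Let A = rng(a) and V = rng(v) be infinite c.e. sets, where a and v are injective computable functions. Define the c.e. set A^V = {v(s) : ∃t > s, a(t) < v(s)}. Then A^V ⊆ V, and for every set X ⊆ ℕ, if A^V ⊆* X (i.e., A^V \ X is finite), then either V ⊆* X or A is Turing reducible to X. -/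
/-- The Dekker-style subset `A^V` built from enumerations `a` of `A` and `v` of `V`. -/
def DekkerOp (a v : ℕ → ℕ) : Set ℕ := {n | ∃ s, n = v s ∧ ∃ t > s, a t < v s}

/-! If `A^V \ X` is finite, there is a stage `s₀` after which every `v s ∉ X` bounds all later
elements of the enumeration of `A` from below: otherwise `v s ∈ A^V \ X`. If moreover `V \ X` is
infinite, the oracle `X` finds, for every `n`, such a stage `s ≥ s₀` with `n < v s`, and then
`n ∈ A` iff `n` is among `a 0, …, a s`. -/

theorem chi_eq_one {A : Set ℕ} {n : ℕ} (h : n ∈ A) : chi A n = 1 := if_pos h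

theorem chi_eq_zero_iff {A : Set ℕ} {n : ℕ} : chi A n = 0 ↔ n ∉ A := by
  by_cases h : n ∈ A <;> simp [chi, h]

namespace OracleRecursiveIn

variable {O : ℕ → ℕ}

theorem of_partrec {f : ℕ →. ℕ} (hf : Nat.Partrec f) : OracleRecursiveIn O f := by
  induction hf with
  | zero => exact .zero
  | succ => exact .succ
  | left => exact .left
  | right => exact .right
  | pair _ _ ihf ihg => exact .pair ihf ihg
  | comp _ _ ihf ihg => exact .comp ihf ihg
  | prec _ _ ihf ihg => exact .prec ihf ihg
  | rfind _ ihf => exact .rfind ihf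

theorem of_computable {f : ℕ → ℕ} (hf : Computable f) : OracleRecursiveIn O f :=
  of_partrec (Partrec.nat_iff.1 hf)

theorem of_eq {f g : ℕ →. ℕ} (hf : OracleRecursiveIn O f) (H : ∀ n, f n = g n) :
    OracleRecursiveIn O g :=
  funext H ▸ hf

theorem comp_total {f g : ℕ → ℕ} (hf : OracleRecursiveIn O f) (hg : OracleRecursiveIn O g) :
    OracleRecursiveIn O ↑(fun n => f (g n)) :=
  (hf.comp hg).of_eq fun _ => Part.bind_some _ _

theorem pair_total {f g : ℕ → ℕ} (hf : OracleRecursiveIn O f) (hg : OracleRecursiveIn O g) :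
    OracleRecursiveIn O ↑(fun n => Nat.pair (f n) (g n)) :=
  (hf.pair hg).of_eq fun _ => by simp [Seq.seq]

theorem comp₂ {h : ℕ → ℕ → ℕ} {f g : ℕ → ℕ} (hh : Computable₂ h) (hf : OracleRecursiveIn O f)
    (hg : OracleRecursiveIn O g) : OracleRecursiveIn O ↑(fun n => h (f n) (g n)) := by
  have hh' : Computable fun m : ℕ => h m.unpair.1 m.unpair.2 :=
    hh.comp (Computable.fst.comp Computable.unpair) (Computable.snd.comp Computable.unpair)
  simpa using (of_computable hh').comp_total (hf.pair_total hg)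

theorem nat_find {p : ℕ → ℕ → Prop} [∀ n, DecidablePred (p n)] {g : ℕ → ℕ}
    (hg : OracleRecursiveIn O g) (hgp : ∀ n k, g (Nat.pair n k) = 0 ↔ p n k)
    (hp : ∀ n, ∃ k, p n k) : OracleRecursiveIn O ↑(fun n => Nat.find (hp n)) := by
  refine hg.rfind.of_eq fun n => Part.eq_some_iff.2 (Nat.mem_rfind.2 ⟨?_, fun hm => ?_⟩)
  · simpa [hgp] using Nat.find_spec (hp n)
  · simpa [hgp] using Nat.find_min (hp n) hm

theorem chi_range_of_modulus {a σ : ℕ → ℕ} (ha : Computable a) (hσ : OracleRecursiveIn O σ)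
    (hmod : ∀ n ∈ Set.range a, ∃ t ≤ σ n, a t = n) : OracleRecursiveIn O ↑(chi (Set.range a)) := by
  have hp (q : ℕ × ℕ) : ∃ t, a t = q.1 ∨ q.2 < t := ⟨q.2 + 1, Or.inr q.2.lt_succ_self⟩
  have hdec : Computable fun r : (ℕ × ℕ) × ℕ => decide (a r.2 = r.1.1 ∨ r.1.2 < r.2) := by
    simpa only [Bool.decide_or] using Primrec.or.to_comp.comp
      (Primrec.eq.decide.to_comp.comp (ha.comp Computable.snd) (Computable.fst.comp Computable.fst))
      (Primrec.nat_lt.decide.to_comp.comp (Computable.snd.comp Computable.fst) Computable.snd)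
  have hfind : Computable fun q => Nat.find (hp q) := Computable.find ⟨inferInstance, hdec⟩ hp
  have hh : Computable₂ fun n s : ℕ => if Nat.find (hp (n, s)) ≤ s then 1 else 0 :=
    (Primrec.ite Primrec.nat_le (Primrec.const 1) (Primrec.const 0)).to_comp.comp
      (hfind.pair Computable.snd)
  refine (comp₂ hh (of_computable Computable.id) hσ).of_eq fun n => congrArg Part.some ?_
  dsimp only
  split_ifs with h
  · obtain hat | hlt := Nat.find_spec (hp (n, σ n))
    · exact (chi_eq_one (A := Set.range a) ⟨_, hat⟩).symm
    · exact absurd h hlt.not_ge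
  · refine (chi_eq_zero_iff.2 fun hn => h ?_).symm
    obtain ⟨t, ht, hat⟩ := hmod n hn
    exact (Nat.find_min' (hp (n, σ n)) (Or.inl hat)).trans ht

end OracleRecursiveIn

open Classical in
theorem OracleRecursiveIn.nat_find_lt_apply_notMem {v : ℕ → ℕ} (hv : Computable v) {X : Set ℕ}
    {s₀ : ℕ} (hex : ∀ n, ∃ s, s₀ ≤ s ∧ n < v s ∧ v s ∉ X) :
    OracleRecursiveIn (chi X) ↑(fun n => Nat.find (hex n)) := by
  have hc : Computable fun m : ℕ => decide (s₀ ≤ m.unpair.2 ∧ m.unpair.1 < v m.unpair.2) := by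
    simpa only [Bool.decide_and] using Primrec.and.to_comp.comp
      (Primrec.nat_le.decide.to_comp.comp (Computable.const s₀)
        (Computable.snd.comp Computable.unpair))
      (Primrec.nat_lt.decide.to_comp.comp (Computable.fst.comp Computable.unpair)
        (hv.comp (Computable.snd.comp Computable.unpair)))
  have hh : Computable₂ fun (m : ℕ) (b : ℕ) =>
      if s₀ ≤ m.unpair.2 ∧ m.unpair.1 < v m.unpair.2 then b else 1 := by
    unfold Computable₂
    simpa only [Bool.cond_decide] using
      (hc.comp Computable.fst).cond Computable.snd (Computable.const 1)
  have hvX : OracleRecursiveIn (chi X) ↑(fun m : ℕ => chi X (v m.unpair.2)) :=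
    OracleRecursiveIn.oracle.comp_total
      (.of_computable (hv.comp (Computable.snd.comp Computable.unpair)))
  refine OracleRecursiveIn.nat_find (OracleRecursiveIn.comp₂ hh (.of_computable Computable.id) hvX)
    (fun n k => ?_) hex
  simp only [id, Nat.unpair_pair]
  split_ifs with h
  · rw [chi_eq_zero_iff]
    tauto
  · exact iff_of_false not_false fun hk => h ⟨hk.1, hk.2.1⟩

section Dekker

variable {a v : ℕ → ℕ}

theorem dekkerOp_subset_range : DekkerOp a v ⊆ Set.range v := by
  rintro _ ⟨s, rfl, -⟩
  exact ⟨s, rfl⟩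

theorem exists_stage_le_of_dekkerOp_diff_finite (hv : v.Injective) {X : Set ℕ}
    (hfin : (DekkerOp a v \ X).Finite) : ∃ s₀, ∀ s ≥ s₀, v s ∉ X → ∀ t > s, v s ≤ a t := by
  obtain ⟨s₀, hs₀⟩ := (hfin.preimage hv.injOn).bddAbove
  refine ⟨s₀ + 1, fun s hs hsX t hts => not_lt.1 fun hlt => ?_⟩
  have := hs₀ ⟨⟨s, rfl, t, hts, hlt⟩, hsX⟩
  omega

theorem exists_stage_lt_notMem_of_range_diff_infinite {X : Set ℕ}
    (hinf : (Set.range v \ X).Infinite) (s₀ n : ℕ) : ∃ s, s₀ ≤ s ∧ n < v s ∧ v s ∉ X := by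
  obtain ⟨_, ⟨⟨s, rfl⟩, hsX⟩, hs⟩ :=
    (hinf.sdiff ((Set.finite_Iic n).union ((Set.finite_lt_nat s₀).image v))).nonempty
  simp only [Set.mem_union, Set.mem_Iic, Set.mem_image, not_or, not_le] at hs
  exact ⟨s, not_lt.1 fun h => hs.2 ⟨s, h, rfl⟩, hs.1, hsX⟩

end Dekker

theorem stmt1_general (a v : ℕ → ℕ) (ha : Computable a) (hv : Computable v)
    (hvinj : Function.Injective v) :
    DekkerOp a v ⊆ Set.range v ∧
      ∀ X : Set ℕ, (DekkerOp a v \ X).Finite →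
        (Set.range v \ X).Finite ∨ SetTuringRed (Set.range a) X := by
  classical
  refine ⟨dekkerOp_subset_range, fun X hfin => or_iff_not_imp_left.2 fun hVX => ?_⟩
  obtain ⟨s₀, hbound⟩ := exists_stage_le_of_dekkerOp_diff_finite hvinj hfin
  have hex := exists_stage_lt_notMem_of_range_diff_infinite hVX s₀
  refine OracleRecursiveIn.chi_range_of_modulus ha
    (OracleRecursiveIn.nat_find_lt_apply_notMem hv hex) ?_
  rintro _ ⟨t, rfl⟩
  obtain ⟨hs₀, hlt, hX⟩ := Nat.find_spec (hex (a t))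
  exact ⟨t, not_lt.1 fun hst => (hbound _ hs₀ hX t hst).not_gt hlt, rfl⟩

theorem stmt1 (a v : ℕ → ℕ) (ha : Computable a) (hv : Computable v)
    (hainj : Function.Injective a) (hvinj : Function.Injective v)
    (hAinf : (Set.range a).Infinite) (hVinf : (Set.range v).Infinite) :
    DekkerOp a v ⊆ Set.range v ∧
      ∀ X : Set ℕ, (DekkerOp a v \ X).Finite →
        (Set.range v \ X).Finite ∨ SetTuringRed (Set.range a) X :=
  stmt1_general a v ha hv hvinj
end
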